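/- Let (X_k)_{k∈ω} be a countable family of K-analytic Tychonoff spaces such that at least one X_k is not compact. Then Compl(⊕_{k∈ω} X_k) = { sup_{k∈ω} f(k) : f ∈ ∏_{k∈ω} Compl(X_k) }, where ⊕ denotes the topological sum; that is, the set of complexities attainable by the topological sum consists exactly of the suprema of all selectors of the sets Compl(X_k). -/

import Mathlib

noncomputable section
open Classical Set Topology Filter Ordinal

universe u v

namespace FBorelPaper

/-! ### Ordinal parity -/

/-- The first uncountable ordinal. -/
def omega1 : Ordinal.{0} := Ordinal.omega 1

/-- An ordinal `a = λ + m` (with `λ` limit or zero, `m < ω`) is *even* iff `m` is even. -/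
def EvenOrd (a : Ordinal.{0}) : Prop := a % 2 = 0

/-- An ordinal `a = λ + m` (with `λ` limit or zero, `m < ω`) is *odd* iff `m` is odd. -/
def OddOrd (a : Ordinal.{0}) : Prop := a % 2 = 1

/-- For `a = λ + 2n + i` (with `λ` limit or zero, `n < ω`, `i ∈ {0,1}`),
`ordPrime a = λ + n` (the ordinal `α'` of the paper). -/
def ordPrime (a : Ordinal.{0}) : Ordinal.{0} :=
  Ordinal.omega0 * (a / Ordinal.omega0) + (a % Ordinal.omega0) / 2

/-! ### The F-Borel hierarchy -/

/-- The `F`-Borel hierarchy of a topological space: `FBorel Y 0` is the family of closed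
sets, and for `0 < a`, `FBorel Y a` consists of all countable unions (for odd `a`),
resp. countable intersections (for even `a`), of members of `⋃ b < a, FBorel Y b`. -/
def FBorel (Y : Type u) [TopologicalSpace Y] : Ordinal.{0} → Set (Set Y) :=
  WellFounded.fix Ordinal.lt_wf (C := fun _ => Set (Set Y)) fun a ih =>
    if a = 0 then { F | IsClosed F }
    else if EvenOrd a then
      { S | ∃ f : ℕ → Set Y, (∀ n, ∃ b, ∃ h : b < a, f n ∈ ih b h) ∧ S = ⋂ n, f n }
    else
      { S | ∃ f : ℕ → Set Y, (∀ n, ∃ b, ∃ h : b < a, f n ∈ ih b h) ∧ S = ⋃ n, f n }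

/-- The list `(σ 0, …, σ (k-1))` of the first `k` values of `σ : ℕ → ℕ`. -/
def seqPrefix (σ : ℕ → ℕ) (k : ℕ) : List ℕ := List.ofFn fun i : Fin k => σ i

/-- A Suslin scheme: a monotone family of sets indexed by finite sequences. -/
def IsSuslinScheme {Y : Type u} (C : List ℕ → Set Y) : Prop :=
  ∀ ⦃s t : List ℕ⦄, s <+: t → C t ⊆ C s

/-- The Suslin operation `A(C) = ⋃_{σ ∈ ω^ω} ⋂_k C(σ|k)`. -/
def suslinOp {Y : Type u} (C : List ℕ → Set Y) : Set Y :=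
  ⋃ σ : ℕ → ℕ, ⋂ k : ℕ, C (seqPrefix σ k)

/-- The Suslin-F subsets of `Y`: results of the Suslin operation applied to schemes of
closed sets. -/
def SuslinF (Y : Type u) [TopologicalSpace Y] : Set (Set Y) :=
  { S | ∃ C : List ℕ → Set Y, (∀ s, IsClosed (C s)) ∧ S = suslinOp C }

/-- The classes `F_a(Y)` for `a ≤ ω₁`, where `F_{ω₁}(Y)` is the class of Suslin-F sets. -/
def FClass (Y : Type u) [TopologicalSpace Y] (a : Ordinal.{0}) : Set (Set Y) :=
  if a < omega1 then FBorel Y a else SuslinF Y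

/-- `ComplIn Y X` is the complexity of `X` in `Y`: the least `a ≤ ω₁` with `X ∈ F_a(Y)`. -/
def ComplIn (Y : Type u) [TopologicalSpace Y] (X : Set Y) : Ordinal.{0} :=
  sInf { a : Ordinal.{0} | a ≤ omega1 ∧ X ∈ FClass Y a }

/-! ### Compactifications, K-analytic spaces, local complexity -/

/-- `(K, e)` is a compactification of `X`: `K` is compact Hausdorff and `e` is a dense
embedding of `X` into `K`. -/
def IsCompactification (X : Type u) [TopologicalSpace X] (K : Type u) [TopologicalSpace K]
    (e : X → K) : Prop :=
  CompactSpace K ∧ T2Space K ∧ IsEmbedding e ∧ DenseRange e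

/-- The set `Compl(X)` of all complexities attained by `X` in its compactifications. -/
def AttainedCompl (X : Type u) [TopologicalSpace X] : Set Ordinal.{0} :=
  { γ | ∃ (K : Type u) (_ : TopologicalSpace K) (e : X → K),
      IsCompactification X K e ∧ Set.range e ∈ SuslinF K ∧ γ = ComplIn K (Set.range e) }

/-- A topological space is K-analytic iff it embeds as a Suslin-F subset of some compact
Hausdorff space. -/
def IsKAnalytic (X : Type u) [TopologicalSpace X] : Prop :=
  ∃ (K : Type u) (_ : TopologicalSpace K) (e : X → K),
    CompactSpace K ∧ T2Space K ∧ IsEmbedding e ∧ Set.range e ∈ SuslinF K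

/-- The local complexity `Compl_y(X, Y)`: the least complexity of `cl(U) ∩ X` in `Y` over
all open neighborhoods `U` of `y` in `Y`. -/
def locComplAt (Y : Type u) [TopologicalSpace Y] (X : Set Y) (y : Y) : Ordinal.{0} :=
  sInf { γ : Ordinal.{0} | ∃ U : Set Y, IsOpen U ∧ y ∈ U ∧ γ = ComplIn Y (closure U ∩ X) }

/-- The local complexity `Compl_loc(X, Y) = sup_{x ∈ X} Compl_x(X, Y)`. -/
def locCompl (Y : Type u) [TopologicalSpace Y] (X : Set Y) : Ordinal.{0} :=
  ⨆ x : X, locComplAt Y X (x : Y)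

/-- The local complexity `Compl_locbar(X, Y) = sup_{y ∈ Y} Compl_y(X, Y)`. -/
def locComplBar (Y : Type u) [TopologicalSpace Y] (X : Set Y) : Ordinal.{0} :=
  ⨆ y : Y, locComplAt Y X y

/-! ### Trees on ω -/

/-- A tree on `ω`: a set of finite sequences closed under initial segments. -/
def IsTree (T : Set (List ℕ)) : Prop := ∀ ⦃s t : List ℕ⦄, s <+: t → t ∈ T → s ∈ T

/-- A tree is well-founded iff it carries no infinite branch. -/
def WellFoundedTree (T : Set (List ℕ)) : Prop := ¬ ∃ σ : ℕ → ℕ, ∀ k : ℕ, seqPrefix σ k ∈ T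

/-- `t` is a leaf of `T`: it belongs to `T` and has no immediate successor in `T`. -/
def IsLeafOf (T : Set (List ℕ)) (t : List ℕ) : Prop := t ∈ T ∧ ∀ n : ℕ, t ++ [n] ∉ T

/-- The tree `T^t = {s | t⌢s ∈ T}` corresponding to `t` in `T`. -/
def subtreeAt (T : Set (List ℕ)) (t : List ℕ) : Set (List ℕ) := { s | t ++ s ∈ T }

/-- The smallest tree containing a set `S` of finite sequences. -/
def clTr (S : Set (List ℕ)) : Set (List ℕ) := { u | ∃ s ∈ S, u <+: s }

/-- The leaf derivative: keep the elements having some proper extension in `T`. -/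
def leafDeriv (T : Set (List ℕ)) : Set (List ℕ) := { t ∈ T | ∃ s ∈ T, t <+: s ∧ t ≠ s }

/-- The derivative `D_iie`: keep the `t ∈ T` admitting infinitely many pairwise
incomparable extensions in `T` of pairwise different lengths. -/
def Diie (T : Set (List ℕ)) : Set (List ℕ) :=
  { t ∈ T | ∃ g : ℕ → List ℕ, (∀ n, g n ∈ T ∧ t <+: g n) ∧
      ∀ ⦃m n : ℕ⦄, m < n →
        (¬ g m <+: g n) ∧ (¬ g n <+: g m) ∧ (g m).length ≠ (g n).length }

/-- Transfinitely iterated derivative, starting from `cl_Tr S` and taking intersections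
at limit stages. -/
def iterDeriv (D : Set (List ℕ) → Set (List ℕ)) (S : Set (List ℕ)) (γ : Ordinal.{0}) :
    Set (List ℕ) :=
  Ordinal.limitRecOn γ (clTr S) (fun _ ih => D ih)
    (fun a _ ih => ⋂ b : Ordinal.{0}, ⋂ h : b < a, ih b h)

/-- The rank associated with the leaf derivative: the least `γ` such that the `(γ+1)`-st
iterated leaf derivative is empty, and `ω₁` if there is no such countable ordinal. -/
def leafRank (T : Set (List ℕ)) : Ordinal.{0} :=
  if ∃ γ : Ordinal.{0}, γ < omega1 ∧ iterDeriv leafDeriv T (γ + 1) = ∅ then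
    sInf { γ : Ordinal.{0} | iterDeriv leafDeriv T (γ + 1) = ∅ }
  else omega1

/-- `E` is the canonical extension of the `l(T)`-scheme `H` to the whole of `T`:
it agrees with `H` on the leaves of `T`, and at a non-leaf `t ∈ T` it is the union
(resp. the intersection) of its values at the immediate successors of `t` in `T` when
the leaf-rank of `T^t` is odd (resp. even). -/
def IsSchemeExtension (Y : Type u) [TopologicalSpace Y] (T : Set (List ℕ))
    (H E : List ℕ → Set Y) : Prop :=
  (∀ t, IsLeafOf T t → E t = H t) ∧
  (∀ t ∈ T, ¬ IsLeafOf T t → OddOrd (leafRank (subtreeAt T t)) →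
      E t = ⋃ n ∈ { n : ℕ | t ++ [n] ∈ T }, E (t ++ [n])) ∧
  (∀ t ∈ T, ¬ IsLeafOf T t → EvenOrd (leafRank (subtreeAt T t)) →
      E t = ⋂ n ∈ { n : ℕ | t ++ [n] ∈ T }, E (t ++ [n]))

/-- `H` (an `l(T)`-scheme of subsets of `X`) is a *universal simple `F_α`-representation*
of `X`: `r_l(T) ≤ α`, and for every space `Y` containing (a copy of) `X`, the extension
of the scheme of closures `(cl_Y (H t))_t` computes `X` at the root. -/
def HasUniversalSimpleRep (X : Type u) [TopologicalSpace X] (α : Ordinal.{0}) : Prop :=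
  ∃ (T : Set (List ℕ)) (H : List ℕ → Set X), IsTree T ∧ WellFoundedTree T ∧ [] ∈ T ∧
    leafRank T ≤ α ∧
    ∀ (Y : Type u) (_ : TopologicalSpace Y) (e : X → Y), IsEmbedding e →
      ∃ E : List ℕ → Set Y,
        IsSchemeExtension Y T (fun t => closure (e '' H t)) E ∧ E [] = Set.range e

/-! ### Canonical trees -/

/-- Auxiliary indices for the canonical trees: at a successor `a = b + 1` every index is
`b`, and at a countable limit the indices enumerate all ordinals `< a` injectively. -/
def canonIdx (a : Ordinal.{0}) (n : ℕ) : Ordinal.{0} :=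
  if hs : ∃ b, a = b + 1 then hs.choose
  else if hf : ∃ f : ℕ → Ordinal.{0}, Function.Injective f ∧ Set.range f = Set.Iio a then
    hf.choose n
  else 0

theorem canonIdx_lt {a : Ordinal.{0}} (h0 : a ≠ 0) (n : ℕ) : canonIdx a n < a := by
  unfold canonIdx
  split
  · next hs =>
      conv_rhs => rw [hs.choose_spec]
      rw [Ordinal.add_one_eq_succ]
      exact Order.lt_succ _
  · split
    · next hf =>
        have hmem : hf.choose n ∈ Set.range hf.choose := Set.mem_range_self n
        rw [hf.choose_spec.2] at hmem
        exact hmem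
    · first | exact pos_iff_ne_zero.mpr h0 | exact Ordinal.pos_of_ne_zero h0 | exact lt_of_le_of_ne (Ordinal.zero_le _) (Ne.symm h0)

/-- The canonical "maximal" trees `T_α` of leaf-rank `α < ω₁` (with `T_α = ω^{<ω}` for
`α ≥ ω₁`): `T_0 = {∅}`, `T_{α+1} = {∅} ∪ ⋃_n n⌢T_α`, and at countable limits
`T_α = {∅} ∪ ⋃_n n⌢T_{π_α(n)}` for an injective enumeration `π_α` of `α`. -/
def canonTree : Ordinal.{0} → Set (List ℕ) :=
  WellFounded.fix Ordinal.lt_wf (C := fun _ => Set (List ℕ)) fun a ih =>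
    if h0 : a = 0 then {([] : List ℕ)}
    else if omega1 ≤ a then Set.univ
    else {([] : List ℕ)} ∪ ⋃ n : ℕ, (List.cons n) '' ih (canonIdx a n) (canonIdx_lt h0 n)

/-- The canonical trees `T^c_α`: `T_{α'}` for even `α`, and `{∅} ∪ 1⌢T_{α'}` for odd `α`. -/
def canonTreeC (a : Ordinal.{0}) : Set (List ℕ) :=
  if EvenOrd a then canonTree (ordPrime a)
  else {([] : List ℕ)} ∪ (List.cons 1) '' canonTree (ordPrime a)

/-- The canonical trees `T^c_{α,i} = {∅} ∪ i⌢T_{α'}` (for odd `α`). -/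
def canonTreeCi (a : Ordinal.{0}) (i : ℕ) : Set (List ℕ) :=
  {([] : List ℕ)} ∪ (List.cons i) '' canonTree (ordPrime a)

/-! ### Admissible maps, `R_T` and regular representations -/

/-- An admissible map on a tree `T`: monotone w.r.t. extension, with
`|φ(t)| = t(0) + ⋯ + t(|t|-1)` for all `t ∈ T`. -/
def Admissible (T : Set (List ℕ)) (φ : List ℕ → List ℕ) : Prop :=
  (∀ ⦃s t : List ℕ⦄, s ∈ T → t ∈ T → s <+: t → φ s <+: φ t) ∧
  (∀ t ∈ T, (φ t).length = t.sum)

/-- `R_T(C)`: the points of `C(∅)` admitting an admissible witness map along `T`. -/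
def RT {Y : Type u} (T : Set (List ℕ)) (C : List ℕ → Set Y) : Set Y :=
  { x | x ∈ C [] ∧ ∃ φ : List ℕ → List ℕ, Admissible T φ ∧ ∀ t ∈ T, x ∈ C (φ t) }

/-- `R_α(C) = R_{T^c_α}(C)`. -/
def Ralpha {Y : Type u} (a : Ordinal.{0}) (C : List ℕ → Set Y) : Set Y :=
  RT (canonTreeC a) C

/-- A Suslin scheme `C` of subsets of `X ⊆ Y` is *complete on `X`*: it is a Suslin scheme
on `X` (it consists of subsets of `X` and the Suslin operation applied to it covers `X`)
such that every nontrivial filter containing, for each `n`, a set `C s` with `|s| = n`,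
has an accumulation point in `X`. -/
def IsCompleteOn (Y : Type u) [TopologicalSpace Y] (X : Set Y) (C : List ℕ → Set Y) :
    Prop :=
  IsSuslinScheme C ∧ (∀ s, C s ⊆ X) ∧ X ⊆ suslinOp C ∧
  ∀ F : Filter Y, F.NeBot → (∀ n : ℕ, ∃ s : List ℕ, s.length = n ∧ C s ∈ F) →
    ∃ x ∈ X, ClusterPt x F

/-- The tree `S_C(y)` of finite sequences `s` with `y ∈ cl_Y (C s)`. -/
def SCtree (Y : Type u) [TopologicalSpace Y] (C : List ℕ → Set Y) (y : Y) :
    Set (List ℕ) :=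
  { s : List ℕ | y ∈ closure (C s) }

/-! ### Zoom spaces -/

/-- The set of isolated points of a topological space. -/
def IsolPts (Y : Type u) [TopologicalSpace Y] : Set Y := { y | IsOpen ({y} : Set Y) }

/-- The underlying set of the zoom space `Z(Y, X)`: the non-isolated points of `Y`
together with the disjoint union of the spaces `X i`, `i ∈ I_Y`. -/
def ZoomCarrier (Y : Type u) [TopologicalSpace Y] (X : IsolPts Y → Type v) :
    Type (max u v) :=
  ({ y : Y // y ∉ IsolPts Y }) ⊕ ((i : IsolPts Y) × X i)

/-- The basic set `V_U ⊆ Z(Y, X)` associated with `U ⊆ Y`: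
`V_U = (U ∖ I_Y) ∪ ⋃ {X i | i ∈ U ∩ I_Y}`. -/
def zoomVSet (Y : Type u) [TopologicalSpace Y] (X : IsolPts Y → Type v) (U : Set Y) :
    Set (ZoomCarrier Y X) :=
  { z | Sum.elim (fun y : { y : Y // y ∉ IsolPts Y } => (y : Y) ∈ U)
      (fun p : (i : IsolPts Y) × X i => (p.1 : Y) ∈ U) z }

/-- The topology of the zoom space `Z(Y, X)`, generated by the open subsets of the
spaces `X i` together with the sets `V_U` for `U` open in `Y`. -/
instance zoomTopology (Y : Type u) [TopologicalSpace Y] (X : IsolPts Y → Type v)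
    [∀ i, TopologicalSpace (X i)] : TopologicalSpace (ZoomCarrier Y X) :=
  TopologicalSpace.generateFrom
    ({ B | ∃ (i : IsolPts Y) (W : Set (X i)), IsOpen W ∧
        B = Sum.inr '' ((Sigma.mk i) '' W) } ∪
     { B | ∃ U : Set Y, IsOpen U ∧ B = zoomVSet Y X U })

/-- The subset of `Z(Y, X)` which is the underlying set of the zoom space `Z(Ys, A)` of
a subspace `Ys ⊆ Y` with respect to subspaces `A i ⊆ X i`
(here the isolated points of `Ys` are identified with those of `Y`). -/
def zoomSub (Y : Type u) [TopologicalSpace Y] (X : IsolPts Y → Type v) (Ys : Set Y)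
    (A : ∀ i : IsolPts Y, Set (X i)) : Set (ZoomCarrier Y X) :=
  { z | Sum.elim (fun y : { y : Y // y ∉ IsolPts Y } => (y : Y) ∈ Ys)
      (fun p : (i : IsolPts Y) × X i => p.2 ∈ A p.1) z }

/-! ### Broom sets and broom spaces -/

/-- A forking sequence: a sequence of nonempty finite sequences with pairwise distinct
first entries. -/
def IsForking (f : ℕ → List ℕ) : Prop :=
  (∀ n, f n ≠ []) ∧ ∀ ⦃m n : ℕ⦄, m ≠ n → (f m).head? ≠ (f n).head?

/-- The hierarchy of finite broom sets: `B ∈ B_α` iff `IsBroomB α B`.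
`B_0 = {{∅}}`; for odd `α`, `B_α = B_{<α} ∪ {h⌢B | B ∈ B_{α-1}, h ∈ ω^{<ω}}`; for even
`α > 0`, `B_α = B_{<α} ∪ {⋃_n f_n⌢B_n | B_n ∈ B_{<α}, (f_n) a forking sequence}`. -/
inductive IsBroomB : Ordinal.{0} → Set (List ℕ) → Prop
  | base : IsBroomB 0 {[]}
  | mono {β α : Ordinal.{0}} {B : Set (List ℕ)} : β < α → IsBroomB β B → IsBroomB α B
  | odd {β : Ordinal.{0}} {B : Set (List ℕ)} (h : List ℕ) : EvenOrd β → IsBroomB β B →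
      IsBroomB (β + 1) ((fun s => h ++ s) '' B)
  | even {α : Ordinal.{0}} {f : ℕ → List ℕ} {Bs : ℕ → Set (List ℕ)}
      (g : ℕ → Ordinal.{0}) :
      0 < α → EvenOrd α → IsForking f →
      (∀ n : ℕ, g n < α) → (∀ n : ℕ, IsBroomB (g n) (Bs n)) →
      IsBroomB α (⋃ n : ℕ, (fun s => f n ++ s) '' Bs n)

/-- The infinite sequence `s⌢ν` obtained by extending the finite sequence `s` by `ν`. -/
def seqAppend (s : List ℕ) (ν : ℕ → ℕ) : ℕ → ℕ :=
  fun k => if h : k < s.length then s.get ⟨k, h⟩ else ν (k - s.length)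

/-- `A` is a broom-extension of `B`:
`A = {s⌢f^s_n⌢ν^s_n | s ∈ B, n ∈ ω}` for forking sequences `(f^s_n)_n, s ∈ B`, and
points `ν^s_n ∈ ω^ω`. -/
def IsBroomExtension (B : Set (List ℕ)) (A : Set (ℕ → ℕ)) : Prop :=
  ∃ (f : List ℕ → ℕ → List ℕ) (ν : List ℕ → ℕ → (ℕ → ℕ)),
    (∀ s ∈ B, IsForking (f s)) ∧
    A = { σ : ℕ → ℕ | ∃ s ∈ B, ∃ n : ℕ, σ = seqAppend (s ++ f s n) (ν s n) }

/-- The hierarchy of infinite broom sets: `A ∈ A_α` iff `A` is a broom-extension of some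
`B ∈ B_α`. -/
def IsBroomA (α : Ordinal.{0}) (A : Set (ℕ → ℕ)) : Prop :=
  ∃ B : Set (List ℕ), IsBroomB α B ∧ IsBroomExtension B A

/-- `u` is a finite initial segment of the infinite sequence `σ`. -/
def InfExtends (u : List ℕ) (σ : ℕ → ℕ) : Prop := seqPrefix σ u.length = u

/-- The tree of all finite initial segments of members of a set of infinite sequences. -/
def clTrInf (S : Set (ℕ → ℕ)) : Set (List ℕ) := { u | ∃ σ ∈ S, InfExtends u σ }

/-- The broom space `T_𝒜` on `ω^ω ∪ {∞}` (with `∞ = none`): every point of `ω^ω` is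
isolated, and the neighborhood subbasis at `∞` consists of the complements of single
points of `ω^ω` and of the complements of the sets `A ∈ 𝒜`. -/
def broomTop (𝒜 : Set (Set (ℕ → ℕ))) : TopologicalSpace (Option (ℕ → ℕ)) :=
  TopologicalSpace.generateFrom
    ({ S | ∃ σ : ℕ → ℕ, S = {Option.some σ} } ∪
     { S | ∃ σ : ℕ → ℕ, S = insert Option.none (Option.some '' ({σ}ᶜ)) } ∪
     { S | ∃ A ∈ 𝒜, S = insert Option.none (Option.some '' Aᶜ) })

/-! A compactification `Y` of the sum contains, for each `k`, the closure of the copy of `X k`,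
which compactifies `X k`; conversely, compactifications `K k` of the summands assemble into one of
the sum inside the one-point compactification of `Σ k, K k`. Either way the copies of the `X k`
are closed-embedded pieces separated by pairwise disjoint `F_σ` sets (in a compact space a
Suslin-F set inside an open set lies in an `F_σ` subset of it), and the complexity of such a
union is the supremum of the complexities of its pieces. At an odd level this is closure under
countable unions. At an even level `α`, write each piece as `⋂ n, g k n` with `g k n` of class
`< α`; the separating sets turn the union into `⋂ m` of unions involving only finitely many
`g k n`, each of class `< α`. A non-compact summand makes the supremum at least `1`, so that
the separating `F_σ` sets are of the right class. -/

open Function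

theorem evenOrd_or_oddOrd (a : Ordinal.{0}) : EvenOrd a ∨ OddOrd a := by
  have h : a % 2 < Order.succ 1 := by
    simpa [Order.succ_eq_add_one, one_add_one_eq_two] using Ordinal.mod_lt a two_ne_zero
  exact Order.le_one_iff.1 (Order.lt_succ_iff.1 h)

theorem not_evenOrd_iff {a : Ordinal.{0}} : ¬ EvenOrd a ↔ OddOrd a := by
  refine ⟨(evenOrd_or_oddOrd a).resolve_left, fun ho he => ?_⟩
  exact one_ne_zero (ho.symm.trans he)

theorem oddOrd_one : OddOrd 1 := Ordinal.mod_eq_of_lt one_lt_two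

theorem OddOrd.ne_zero {a : Ordinal.{0}} (h : OddOrd a) : a ≠ 0 := by
  rintro rfl
  exact zero_ne_one ((Ordinal.zero_mod 2).symm.trans h)

theorem EvenOrd.oddOrd_add_one {a : Ordinal.{0}} (h : EvenOrd a) : OddOrd (a + 1) := by
  have ha : a = 2 * (a / 2) := by
    simpa [show a % 2 = 0 from h] using (Ordinal.div_add_mod a 2).symm
  rw [OddOrd, ha, Ordinal.mul_add_mod_self]
  exact oddOrd_one

theorem EvenOrd.one_lt {a : Ordinal.{0}} (h : EvenOrd a) (h0 : a ≠ 0) : 1 < a := by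
  rcases lt_trichotomy 1 a with h1 | rfl | h1
  · exact h1
  · exact absurd h (not_evenOrd_iff.2 oddOrd_one)
  · exact absurd (Order.lt_one_iff.1 h1) h0

theorem EvenOrd.exists_oddOrd_between {a b : Ordinal.{0}} (ha : EvenOrd a) (hb : b < a) :
    ∃ d, OddOrd d ∧ b ≤ d ∧ d < a := by
  rcases evenOrd_or_oddOrd b with hbe | hbo
  · refine ⟨b + 1, hbe.oddOrd_add_one, le_self_add, ?_⟩
    refine (Order.add_one_le_iff.2 hb).lt_of_ne fun h => ?_
    exact not_evenOrd_iff.2 (h ▸ hbe.oddOrd_add_one) ha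
  · exact ⟨b, hbo, le_rfl, hb⟩

section FBorel

variable {Y : Type*} [TopologicalSpace Y]

theorem FBorel_eq (a : Ordinal.{0}) :
    FBorel Y a = if a = 0 then { F | IsClosed F }
      else if EvenOrd a then
        { S | ∃ f : ℕ → Set Y, (∀ n, ∃ b, ∃ _ : b < a, f n ∈ FBorel Y b) ∧ S = ⋂ n, f n }
      else
        { S | ∃ f : ℕ → Set Y, (∀ n, ∃ b, ∃ _ : b < a, f n ∈ FBorel Y b) ∧ S = ⋃ n, f n } :=
  WellFounded.fix_eq _ _ _

theorem mem_FBorel_zero {A : Set Y} : A ∈ FBorel Y 0 ↔ IsClosed A := by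
  rw [FBorel_eq]; simp

theorem mem_FBorel_of_evenOrd {a : Ordinal.{0}} (h0 : a ≠ 0) (he : EvenOrd a) {A : Set Y} :
    A ∈ FBorel Y a ↔
      ∃ f : ℕ → Set Y, (∀ n, ∃ b < a, f n ∈ FBorel Y b) ∧ A = ⋂ n, f n := by
  rw [FBorel_eq, if_neg h0, if_pos he]
  simp only [exists_prop, Set.mem_ofPred_eq]

theorem mem_FBorel_of_oddOrd {a : Ordinal.{0}} (ho : OddOrd a) {A : Set Y} :
    A ∈ FBorel Y a ↔
      ∃ f : ℕ → Set Y, (∀ n, ∃ b < a, f n ∈ FBorel Y b) ∧ A = ⋃ n, f n := by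
  rw [FBorel_eq, if_neg ho.ne_zero, if_neg (not_evenOrd_iff.2 ho)]
  simp only [exists_prop, Set.mem_ofPred_eq]

theorem iInter_mem_FBorel_of_evenOrd {a : Ordinal.{0}} (h0 : a ≠ 0) (he : EvenOrd a)
    {A : ℕ → Set Y} (hA : ∀ n, ∃ b < a, A n ∈ FBorel Y b) : (⋂ n, A n) ∈ FBorel Y a :=
  (mem_FBorel_of_evenOrd h0 he).2 ⟨A, hA, rfl⟩

theorem FBorel_mono {a b : Ordinal.{0}} (h : b ≤ a) : FBorel Y b ⊆ FBorel Y a := by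
  intro A hA
  rcases h.lt_or_eq with h | rfl
  · rcases evenOrd_or_oddOrd a with he | ho
    · exact (mem_FBorel_of_evenOrd h.ne_bot he).2
        ⟨fun _ => A, fun _ => ⟨b, h, hA⟩, (Set.iInter_const A).symm⟩
    · exact (mem_FBorel_of_oddOrd ho).2 ⟨fun _ => A, fun _ => ⟨b, h, hA⟩, (Set.iUnion_const A).symm⟩
  · exact hA

theorem mem_FBorel_of_isClosed {F : Set Y} (hF : IsClosed F) (a : Ordinal.{0}) :
    F ∈ FBorel Y a :=
  FBorel_mono zero_le (mem_FBorel_zero.2 hF)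

theorem iUnion_mem_FBorel_of_oddOrd_of_lt {ι : Type*} [Countable ι] {a : Ordinal.{0}} (ho : OddOrd a)
    {A : ι → Set Y} (hA : ∀ i, ∃ b < a, A i ∈ FBorel Y b) : (⋃ i, A i) ∈ FBorel Y a := by
  rcases isEmpty_or_nonempty ι with hι | hι
  · rw [Set.iUnion_of_empty]
    exact mem_FBorel_of_isClosed isClosed_empty a
  · obtain ⟨s, hs⟩ := exists_surjective_nat ι
    rw [← hs.iUnion_comp]
    exact (mem_FBorel_of_oddOrd ho).2 ⟨_, fun n => hA (s n), rfl⟩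

theorem iUnion_mem_FBorel_of_oddOrd {ι : Type*} [Countable ι] {a : Ordinal.{0}}
    (ho : OddOrd a) {A : ι → Set Y} (hA : ∀ i, A i ∈ FBorel Y a) : (⋃ i, A i) ∈ FBorel Y a := by
  choose f hf hAf using fun i => (mem_FBorel_of_oddOrd ho).1 (hA i)
  rw [show (⋃ i, A i) = ⋃ p : ι × ℕ, f p.1 p.2 by simp only [hAf, Set.iUnion_prod']]
  exact iUnion_mem_FBorel_of_oddOrd_of_lt ho fun p => hf p.1 p.2

theorem inter_mem_FBorel {a : Ordinal.{0}} {A B : Set Y} (hA : A ∈ FBorel Y a)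
    (hB : B ∈ FBorel Y a) : A ∩ B ∈ FBorel Y a := by
  induction a using WellFoundedLT.induction generalizing A B with
  | _ a IH =>
  have hlt : ∀ {A' B' : Set Y}, (∃ c < a, A' ∈ FBorel Y c) → (∃ d < a, B' ∈ FBorel Y d) →
      ∃ e < a, A' ∩ B' ∈ FBorel Y e := by
    rintro A' B' ⟨c, hc, hA'⟩ ⟨d, hd, hB'⟩
    exact ⟨max c d, max_lt hc hd, IH _ (max_lt hc hd) (FBorel_mono (le_max_left c d) hA')
      (FBorel_mono (le_max_right c d) hB')⟩
  rcases eq_or_ne a 0 with rfl | h0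
  · exact mem_FBorel_zero.2 ((mem_FBorel_zero.1 hA).inter (mem_FBorel_zero.1 hB))
  rcases evenOrd_or_oddOrd a with he | ho
  · obtain ⟨f, hf, rfl⟩ := (mem_FBorel_of_evenOrd h0 he).1 hA
    obtain ⟨g, hg, rfl⟩ := (mem_FBorel_of_evenOrd h0 he).1 hB
    rw [← Set.iInter_inter_distrib]
    exact iInter_mem_FBorel_of_evenOrd h0 he fun n => hlt (hf n) (hg n)
  · obtain ⟨f, hf, rfl⟩ := (mem_FBorel_of_oddOrd ho).1 hA
    obtain ⟨g, hg, rfl⟩ := (mem_FBorel_of_oddOrd ho).1 hB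
    rw [Set.iUnion_inter_iUnion, ← Set.iUnion_prod' fun p : ℕ × ℕ => f p.1 ∩ g p.2]
    exact iUnion_mem_FBorel_of_oddOrd_of_lt ho fun p => hlt (hf p.1) (hg p.2)

theorem mapsTo_FBorel {X : Type*} [TopologicalSpace X] {Φ : Set X → Set Y}
    (hclosed : ∀ F, IsClosed F → IsClosed (Φ F))
    (hunion : ∀ f : ℕ → Set X, Φ (⋃ n, f n) = ⋃ n, Φ (f n))
    (hinter : ∀ f : ℕ → Set X, Φ (⋂ n, f n) = ⋂ n, Φ (f n)) (a : Ordinal.{0}) :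
    Set.MapsTo Φ (FBorel X a) (FBorel Y a) := by
  induction a using WellFoundedLT.induction with
  | _ a IH =>
  intro A hA
  have hlt : ∀ {A' : Set X}, (∃ c < a, A' ∈ FBorel X c) → ∃ c < a, Φ A' ∈ FBorel Y c :=
    fun ⟨c, hc, hA'⟩ => ⟨c, hc, IH c hc hA'⟩
  rcases eq_or_ne a 0 with rfl | h0
  · exact mem_FBorel_zero.2 (hclosed A (mem_FBorel_zero.1 hA))
  rcases evenOrd_or_oddOrd a with he | ho
  · obtain ⟨f, hf, rfl⟩ := (mem_FBorel_of_evenOrd h0 he).1 hA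
    rw [hinter]
    exact iInter_mem_FBorel_of_evenOrd h0 he fun n => hlt (hf n)
  · obtain ⟨f, hf, rfl⟩ := (mem_FBorel_of_oddOrd ho).1 hA
    rw [hunion]
    exact iUnion_mem_FBorel_of_oddOrd_of_lt ho fun n => hlt (hf n)

theorem preimage_mem_FBorel {X : Type*} [TopologicalSpace X] {g : X → Y} (hg : Continuous g)
    {a : Ordinal.{0}} {A : Set Y} (hA : A ∈ FBorel Y a) : g ⁻¹' A ∈ FBorel X a :=
  mapsTo_FBorel (fun _ hF => hF.preimage hg) (fun _ => Set.preimage_iUnion)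
    (fun _ => Set.preimage_iInter) a hA

theorem image_mem_FBorel {X : Type*} [TopologicalSpace X] {g : X → Y}
    (hg : IsClosedEmbedding g) {a : Ordinal.{0}} {A : Set X} (hA : A ∈ FBorel X a) :
    g '' A ∈ FBorel Y a :=
  mapsTo_FBorel (fun F hF => hg.isClosedMap F hF) (fun _ => Set.image_iUnion)
    (fun _ => hg.injective.injOn.image_iInter_eq) a hA

omit [TopologicalSpace Y] in
/-- Each stage `m` involves only finitely many of the `g k n`, which keeps it below an even level
in `iUnion_mem_FBorel_of_separated`. -/
theorem iUnion_inter_iInter_eq_iInter_iUnion {P : ℕ → Set Y} (hP : Pairwise (Disjoint on P))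
    (g : ℕ → ℕ → Set Y) :
    (⋃ k, P k ∩ ⋂ n, g k n) = ⋂ m, ⋃ k, if k ≤ m then P k ∩ g k (m - k) else P k := by
  have hQP : ∀ m k, (if k ≤ m then P k ∩ g k (m - k) else P k) ⊆ P k := fun m k => by
    split_ifs
    exacts [Set.inter_subset_left, subset_rfl]
  ext x
  simp only [Set.mem_iUnion, Set.mem_iInter, Set.mem_inter_iff]
  constructor
  · rintro ⟨k, hxP, hxg⟩ m
    exact ⟨k, by split_ifs <;> simp [hxP, hxg]⟩
  · intro hx
    obtain ⟨k, hk⟩ := hx 0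
    have hxP : x ∈ P k := hQP 0 k hk
    refine ⟨k, hxP, fun n => ?_⟩
    obtain ⟨j, hj⟩ := hx (n + k)
    obtain rfl : j = k := by
      by_contra hjk
      exact Set.disjoint_left.1 (hP hjk) (hQP _ j hj) hxP
    rw [if_pos (Nat.le_add_left j n), Nat.add_sub_cancel] at hj
    exact hj.2

theorem iUnion_mem_FBorel_of_separated {α : Ordinal.{0}} (h1 : 1 ≤ α) {R P : ℕ → Set Y}
    (hR : ∀ k, R k ∈ FBorel Y α) (hP : ∀ k, P k ∈ FBorel Y 1) (hRP : ∀ k, R k ⊆ P k)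
    (hdisj : Pairwise (Disjoint on P)) : (⋃ k, R k) ∈ FBorel Y α := by
  rcases evenOrd_or_oddOrd α with he | ho
  swap
  · exact iUnion_mem_FBorel_of_oddOrd ho hR
  have h0 : α ≠ 0 := (zero_lt_one.trans_le h1).ne'
  choose g hg hRg using fun k => (mem_FBorel_of_evenOrd h0 he).1 (hR k)
  choose c hcα hgc using hg
  have hR' : ∀ k, R k = P k ∩ ⋂ n, g k n := fun k => by
    rw [← hRg k, Set.inter_eq_right.2 (hRP k)]
  simp only [hR', iUnion_inter_iInter_eq_iInter_iUnion hdisj g]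
  refine iInter_mem_FBorel_of_evenOrd h0 he fun m => ?_
  set β := (Finset.range (m + 1)).sup fun k => max 1 (c k (m - k))
  have hβ : β < α := (Finset.sup_lt_iff (zero_lt_one.trans_le h1)).2 fun k _ =>
    max_lt (he.one_lt h0) (hcα k (m - k))
  have h1β : 1 ≤ β := (le_max_left _ _).trans
    (Finset.le_sup (f := fun k => max 1 (c k (m - k))) (Finset.mem_range.2 m.succ_pos))
  obtain ⟨δ, hδ, hβδ, hδα⟩ := he.exists_oddOrd_between hβ
  refine ⟨δ, hδα, iUnion_mem_FBorel_of_oddOrd hδ fun k => ?_⟩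
  split_ifs with hkm
  · have hk : max 1 (c k (m - k)) ≤ δ := (Finset.le_sup (f := fun k => max 1 (c k (m - k)))
      (Finset.mem_range.2 (Nat.lt_succ_of_le hkm))).trans hβδ
    exact inter_mem_FBorel (FBorel_mono ((le_max_left _ _).trans hk) (hP k))
      (FBorel_mono ((le_max_right _ _).trans hk) (hgc k (m - k)))
  · exact FBorel_mono (h1β.trans hβδ) (hP k)

end FBorel

theorem seqPrefix_eq_map (σ : ℕ → ℕ) (k : ℕ) : seqPrefix σ k = (List.range k).map σ :=
  List.ext_getElem (by simp [seqPrefix]) fun i _ _ => by simp [seqPrefix]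

theorem seqPrefix_succ (σ : ℕ → ℕ) (k : ℕ) :
    seqPrefix σ (k + 1) = σ 0 :: seqPrefix (fun i => σ (i + 1)) k :=
  List.ofFn_succ

theorem seqPrefix_prefix_seqPrefix (σ : ℕ → ℕ) {j k : ℕ} (h : j ≤ k) :
    seqPrefix σ j <+: seqPrefix σ k := by
  simp [List.prefix_iff_eq_take, seqPrefix_eq_map, ← List.map_take, List.take_range, h]

theorem eq_seqPrefix_of_prefix {σ : ℕ → ℕ} {k : ℕ} {t : List ℕ} (h : t <+: seqPrefix σ k) :
    t = seqPrefix σ t.length := by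
  have hk : t.length ≤ k := by simpa [seqPrefix] using h.length_le
  rw [List.prefix_iff_eq_take.1 h]
  simp [seqPrefix_eq_map, ← List.map_take, List.take_range, hk]

section SuslinF

variable {Y : Type*} [TopologicalSpace Y]

theorem preimage_mem_SuslinF {X : Type*} [TopologicalSpace X] {g : X → Y} (hg : Continuous g)
    {S : Set Y} (hS : S ∈ SuslinF Y) : g ⁻¹' S ∈ SuslinF X := by
  obtain ⟨C, hC, rfl⟩ := hS
  exact ⟨fun s => g ⁻¹' C s, fun s => (hC s).preimage hg, by
    simp only [suslinOp, Set.preimage_iUnion, Set.preimage_iInter]⟩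

theorem image_mem_SuslinF {X : Type*} [TopologicalSpace X] {g : X → Y}
    (hg : IsClosedEmbedding g) {S : Set X} (hS : S ∈ SuslinF X) : g '' S ∈ SuslinF Y := by
  obtain ⟨C, hC, rfl⟩ := hS
  exact ⟨fun s => g '' C s, fun s => hg.isClosedMap _ (hC s), by
    simp only [suslinOp, Set.image_iUnion, hg.injective.injOn.image_iInter_eq]⟩

theorem iUnion_mem_SuslinF {S : ℕ → Set Y} (hS : ∀ k, S k ∈ SuslinF Y) :
    (⋃ k, S k) ∈ SuslinF Y := by
  choose C hC hSC using hS
  refine ⟨fun s => s.casesOn Set.univ C, fun s => s.casesOn isClosed_univ hC, ?_⟩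
  ext x
  simp only [hSC, suslinOp, Set.mem_iUnion, Set.mem_iInter]
  constructor
  · rintro ⟨k, τ, hτ⟩
    refine ⟨fun i => i.casesOn k τ, fun m => m.casesOn trivial fun m => ?_⟩
    rw [seqPrefix_succ]
    exact hτ m
  · rintro ⟨σ, hσ⟩
    exact ⟨σ 0, fun i => σ (i + 1), fun m => by simpa only [seqPrefix_succ] using hσ (m + 1)⟩

theorem exists_isSuslinScheme_of_mem_SuslinF {S : Set Y} (hS : S ∈ SuslinF Y) :
    ∃ C : List ℕ → Set Y, IsSuslinScheme C ∧ (∀ s, IsClosed (C s)) ∧ S = suslinOp C := by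
  obtain ⟨C, hC, rfl⟩ := hS
  refine ⟨fun s => ⋂ t, ⋂ (_ : t <+: s), C t,
    fun s t hst => Set.biInter_mono (fun _ hu => List.IsPrefix.trans hu hst) fun _ _ => subset_rfl,
    fun s => isClosed_biInter fun t _ => hC t, ?_⟩
  refine Set.iUnion_congr fun σ => Set.Subset.antisymm ?_ ?_
  · refine fun x hx => Set.mem_iInter.2 fun k => Set.mem_iInter₂.2 fun t ht => ?_
    rw [eq_seqPrefix_of_prefix ht]
    exact Set.mem_iInter.1 hx _
  · exact Set.iInter_mono fun k => Set.biInter_subset_of_mem (List.prefix_refl _)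

theorem exists_FBorel_one_between [CompactSpace Y] {S U : Set Y} (hS : S ∈ SuslinF Y)
    (hU : IsOpen U) (hSU : S ⊆ U) : ∃ P ∈ FBorel Y 1, S ⊆ P ∧ P ⊆ U := by
  obtain ⟨C, hmono, hC, rfl⟩ := exists_isSuslinScheme_of_mem_SuslinF hS
  refine ⟨⋃ s : {s // C s ⊆ U}, C s,
    iUnion_mem_FBorel_of_oddOrd oddOrd_one fun s => mem_FBorel_of_isClosed (hC s) 1, ?_,
    Set.iUnion_subset fun s => s.2⟩
  refine Set.iUnion_subset fun σ => ?_
  have hanti : Antitone fun k => C (seqPrefix σ k) :=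
    fun j k hjk => hmono (seqPrefix_prefix_seqPrefix σ hjk)
  obtain ⟨k, hk⟩ := hU.isClosed_compl.isCompact.elim_directed_family_closed _
    (fun k => hC (seqPrefix σ k))
    (Set.disjoint_iff_inter_eq_empty.1 (Set.disjoint_compl_left_iff_subset.2
      ((Set.subset_iUnion (fun σ => ⋂ k, C (seqPrefix σ k)) σ).trans hSU))) hanti.directed_ge
  exact (Set.iInter_subset _ k).trans (Set.subset_iUnion_of_subset ⟨seqPrefix σ k,
    Set.disjoint_compl_left_iff_subset.1 (Set.disjoint_iff_inter_eq_empty.2 hk)⟩ subset_rfl)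

end SuslinF

section Complexity

variable {Y : Type*} [TopologicalSpace Y]

theorem complIn_le_of_mem_FBorel {a : Ordinal.{0}} (ha : a < omega1) {S : Set Y}
    (hS : S ∈ FBorel Y a) : ComplIn Y S ≤ a :=
  csInf_le' ⟨ha.le, by rwa [FClass, if_pos ha]⟩

theorem complIn_le_omega1 {S : Set Y} (hS : S ∈ SuslinF Y) : ComplIn Y S ≤ omega1 :=
  csInf_le' ⟨le_rfl, by rwa [FClass, if_neg (lt_irrefl _)]⟩

theorem mem_FBorel_complIn {S : Set Y} (hS : S ∈ SuslinF Y) (h : ComplIn Y S < omega1) :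
    S ∈ FBorel Y (ComplIn Y S) := by
  have hmem : S ∈ FClass Y (ComplIn Y S) := (csInf_mem (s := {a | a ≤ omega1 ∧ S ∈ FClass Y a})
    ⟨omega1, le_rfl, by rwa [FClass, if_neg (lt_irrefl _)]⟩).2
  rwa [FClass, if_pos h] at hmem

theorem complIn_preimage_le {X : Type*} [TopologicalSpace X] {g : X → Y} (hg : Continuous g)
    {S : Set Y} (hS : S ∈ SuslinF Y) : ComplIn X (g ⁻¹' S) ≤ ComplIn Y S := by
  rcases lt_or_ge (ComplIn Y S) omega1 with h | h
  · exact complIn_le_of_mem_FBorel h (preimage_mem_FBorel hg (mem_FBorel_complIn hS h))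
  · exact (complIn_le_omega1 (preimage_mem_SuslinF hg hS)).trans h

theorem complIn_image_le {X : Type*} [TopologicalSpace X] {g : X → Y}
    (hg : IsClosedEmbedding g) {A : Set X} (hA : A ∈ SuslinF X) :
    ComplIn Y (g '' A) ≤ ComplIn X A := by
  rcases lt_or_ge (ComplIn X A) omega1 with h | h
  · exact complIn_le_of_mem_FBorel h (image_mem_FBorel hg (mem_FBorel_complIn hA h))
  · exact (complIn_le_omega1 (image_mem_SuslinF hg hA)).trans h

theorem complIn_preimage_of_subset_range {X : Type*} [TopologicalSpace X] {g : X → Y}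
    (hg : IsClosedEmbedding g) {S : Set Y} (hS : S ∈ SuslinF Y) (hSg : S ⊆ Set.range g) :
    ComplIn X (g ⁻¹' S) = ComplIn Y S := by
  refine le_antisymm (complIn_preimage_le hg.continuous hS) ?_
  simpa only [Set.image_preimage_eq_of_subset hSg] using
    complIn_image_le hg (preimage_mem_SuslinF hg.continuous hS)

theorem one_le_complIn_of_not_compactSpace {X K : Type u} [TopologicalSpace X]
    [TopologicalSpace K] {e : X → K} (hc : IsCompactification X K e)
    (hS : Set.range e ∈ SuslinF K) (hX : ¬ CompactSpace X) : 1 ≤ ComplIn K (Set.range e) := by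
  obtain ⟨_, _, he, _⟩ := hc
  by_contra! h
  have h0 : ComplIn K (Set.range e) = 0 := Order.lt_one_iff.1 h
  have hclosed := mem_FBorel_complIn hS (h0 ▸ Ordinal.omega_pos 1)
  rw [h0, mem_FBorel_zero] at hclosed
  exact hX (IsClosedEmbedding.mk he hclosed).compactSpace

omit [TopologicalSpace Y] in
theorem eq_iUnion_image_preimage {ι : Type*} {K : ι → Type*} {g : ∀ i, K i → Y} {S : Set Y}
    (hcover : S ⊆ ⋃ i, Set.range (g i)) : S = ⋃ i, g i '' (g i ⁻¹' S) := by
  simp only [Set.image_preimage_eq_inter_range, ← Set.inter_iUnion, Set.inter_eq_left.2 hcover]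

theorem mem_SuslinF_of_preimage {K : ℕ → Type*} [∀ k, TopologicalSpace (K k)]
    {g : ∀ k, K k → Y} (hg : ∀ k, IsClosedEmbedding (g k)) {S : Set Y}
    (hcover : S ⊆ ⋃ k, Set.range (g k)) (hS : ∀ k, g k ⁻¹' S ∈ SuslinF (K k)) :
    S ∈ SuslinF Y := by
  rw [eq_iUnion_image_preimage hcover]
  exact iUnion_mem_SuslinF fun k => image_mem_SuslinF (hg k) (hS k)

theorem complIn_eq_iSup_complIn_preimage {K : ℕ → Type*} [∀ k, TopologicalSpace (K k)]
    {g : ∀ k, K k → Y} (hg : ∀ k, IsClosedEmbedding (g k)) {S : Set Y}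
    (hcover : S ⊆ ⋃ k, Set.range (g k)) (hS : ∀ k, g k ⁻¹' S ∈ SuslinF (K k))
    {P : ℕ → Set Y} (hP : ∀ k, P k ∈ FBorel Y 1) (hSP : ∀ k, S ∩ Set.range (g k) ⊆ P k)
    (hdisj : Pairwise (Disjoint on P)) (h1 : ∃ k, 1 ≤ ComplIn (K k) (g k ⁻¹' S)) :
    ComplIn Y S = ⨆ k, ComplIn (K k) (g k ⁻¹' S) := by
  have hSY := mem_SuslinF_of_preimage hg hcover hS
  refine le_antisymm ?_ (Ordinal.iSup_le fun k => complIn_preimage_le (hg k).continuous hSY)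
  set α := ⨆ k, ComplIn (K k) (g k ⁻¹' S)
  have hle : ∀ k, ComplIn (K k) (g k ⁻¹' S) ≤ α := Ordinal.le_iSup _
  rcases lt_or_ge α omega1 with hα | hα
  · refine complIn_le_of_mem_FBorel hα ?_
    rw [eq_iUnion_image_preimage hcover]
    obtain ⟨k₀, hk₀⟩ := h1
    refine iUnion_mem_FBorel_of_separated (hk₀.trans (hle k₀)) (fun k => ?_) hP
      (fun k => by rw [Set.image_preimage_eq_inter_range]; exact hSP k) hdisj
    exact image_mem_FBorel (hg k)
      (FBorel_mono (hle k) (mem_FBorel_complIn (hS k) ((hle k).trans_lt hα)))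
  · exact (complIn_le_omega1 hSY).trans hα

end Complexity

section Compactification

def toClosureRange {X K : Type*} [TopologicalSpace K] (e : X → K) : X → closure (Set.range e) :=
  Set.codRestrict e _ fun x => subset_closure (Set.mem_range_self x)

theorem range_toClosureRange {X K : Type*} [TopologicalSpace K] (e : X → K) :
    Set.range (toClosureRange e) = Subtype.val ⁻¹' Set.range e := by
  ext y
  simp [toClosureRange]

theorem isCompactification_toClosureRange {X K : Type u} [TopologicalSpace X]
    [TopologicalSpace K] [CompactSpace K] [T2Space K] {e : X → K} (he : IsEmbedding e) :
    IsCompactification X (closure (Set.range e)) (toClosureRange e) := by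
  refine ⟨isCompact_iff_compactSpace.1 isClosed_closure.isCompact, inferInstance,
    he.codRestrict _ _, fun y => closure_subtype.2 ?_⟩
  rw [range_toClosureRange, Subtype.image_preimage_coe,
    Set.inter_eq_right.2 subset_closure]
  exact y.2

instance {ι : Type*} {K : ι → Type*} [∀ i, TopologicalSpace (K i)]
    [∀ i, WeaklyLocallyCompactSpace (K i)] : WeaklyLocallyCompactSpace (Σ i, K i) where
  exists_compact_mem_nhds := fun ⟨i, x⟩ => by
    obtain ⟨s, hs, hsx⟩ := exists_compact_mem_nhds x
    exact ⟨Sigma.mk i '' s, hs.image continuous_sigmaMk, isOpenMap_sigmaMk.image_mem_nhds hsx⟩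

theorem exists_isOpen_pairwise_disjoint_sigma {ι Y : Type*} {X : ι → Type*}
    [∀ i, TopologicalSpace (X i)] [TopologicalSpace Y] {E : (Σ i, X i) → Y}
    (hE : IsInducing E) (hEd : DenseRange E) :
    ∃ V : ι → Set Y, (∀ i, IsOpen (V i)) ∧ (∀ i, Set.range (E ∘ Sigma.mk i) ⊆ V i) ∧
      Pairwise (Disjoint on V) := by
  choose V hVo hEV using fun i => hE.isOpen_iff.1 (isOpen_sigma_fst_preimage {i})
  refine ⟨V, hVo, fun i => ?_, fun i j hij => ?_⟩
  · rintro _ ⟨x, rfl⟩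
    exact (Set.ext_iff.1 (hEV i) ⟨i, x⟩).2 rfl
  · refine Set.disjoint_iff_inter_eq_empty.2 (Set.not_nonempty_iff_eq_empty.1 fun hne => ?_)
    obtain ⟨p, hpi, hpj⟩ := hEd.exists_mem_open ((hVo i).inter (hVo j)) hne
    have hi : p.1 = i := (Set.ext_iff.1 (hEV i) p).1 hpi
    have hj : p.1 = j := (Set.ext_iff.1 (hEV j) p).1 hpj
    exact hij (hi.symm.trans hj)

theorem range_inter_closure_range_sigmaMk {ι Y : Type*} {X : ι → Type*}
    [∀ i, TopologicalSpace (X i)] [TopologicalSpace Y] {E : (Σ i, X i) → Y}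
    (hE : IsInducing E) (hEd : DenseRange E) (i : ι) :
    Set.range E ∩ closure (Set.range (E ∘ Sigma.mk i)) = Set.range (E ∘ Sigma.mk i) := by
  obtain ⟨V, hVo, hEV, hVd⟩ := exists_isOpen_pairwise_disjoint_sigma hE hEd
  refine Set.Subset.antisymm ?_ fun y hy => ⟨?_, subset_closure hy⟩
  · rintro _ ⟨⟨⟨j, x⟩, rfl⟩, hx⟩
    obtain rfl | hji := eq_or_ne j i
    · exact ⟨x, rfl⟩
    · exact absurd (hEV j ⟨x, rfl⟩)
        (Set.disjoint_left.1 (((hVd hji.symm).mono_left (hEV i)).closure_left (hVo j)) hx)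
  · obtain ⟨x, rfl⟩ := hy
    exact ⟨⟨i, x⟩, rfl⟩

end Compactification

section TopologicalSum

variable {X : ℕ → Type u} [∀ k, TopologicalSpace (X k)]

theorem iSup_mem_attainedCompl_sigma (hX : ∃ k, ¬ CompactSpace (X k)) {f : ℕ → Ordinal.{0}}
    (hf : ∀ k, f k ∈ AttainedCompl (X k)) : (⨆ k, f k) ∈ AttainedCompl ((k : ℕ) × X k) := by
  choose K tK e hc hS hfe using hf
  have hcpt : ∀ k, CompactSpace (K k) := fun k => (hc k).1
  have ht2 : ∀ k, T2Space (K k) := fun k => (hc k).2.1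
  set g : ∀ k, K k → OnePoint ((k : ℕ) × K k) := fun k y => ↑(⟨k, y⟩ : (k : ℕ) × K k)
  have hg : ∀ k, IsClosedEmbedding (g k) := fun k =>
    (OnePoint.continuous_coe.comp continuous_sigmaMk).isClosedEmbedding
      (OnePoint.coe_injective.comp sigma_mk_injective)
  set E : (k : ℕ) × X k → OnePoint ((k : ℕ) × K k) := fun p => g p.1 (e p.1 p.2)
  have hE : IsEmbedding E := OnePoint.isOpenEmbedding_coe.isEmbedding.comp
    ((isEmbedding_sigmaMap injective_id).2 fun k => (hc k).2.2.1)
  have hcover : Set.range E ⊆ ⋃ k, Set.range (g k) := by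
    rintro _ ⟨⟨k, x⟩, rfl⟩
    exact Set.mem_iUnion.2 ⟨k, _, rfl⟩
  have hpre : ∀ k, g k ⁻¹' Set.range E = Set.range (e k) := fun k => by
    ext y
    simp only [g, E, Set.mem_preimage, Set.mem_range, OnePoint.some_eq_iff, Sigma.ext_iff,
      Sigma.exists, exists_and_left, exists_eq_left, heq_eq_eq]
  have hdisj : Pairwise (Disjoint on fun k => Set.range (g k)) := by
    refine fun j k hjk => Set.disjoint_left.2 ?_
    rintro _ ⟨y, rfl⟩ ⟨z, hz⟩
    exact hjk (congrArg Sigma.fst (OnePoint.coe_injective hz)).symm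
  have hSE : Set.range E ∈ SuslinF (OnePoint ((k : ℕ) × K k)) :=
    mem_SuslinF_of_preimage hg hcover fun k => hpre k ▸ hS k
  obtain ⟨k₀, hk₀⟩ := hX
  have hcompl : ComplIn _ (Set.range E) = ⨆ k, f k := by
    rw [complIn_eq_iSup_complIn_preimage hg hcover (fun k => hpre k ▸ hS k)
      (fun k => mem_FBorel_of_isClosed (hg k).isClosed_range 1)
      (fun k => Set.inter_subset_right) hdisj
      ⟨k₀, hpre k₀ ▸ one_le_complIn_of_not_compactSpace (hc k₀) (hS k₀) hk₀⟩]
    simp only [hpre, hfe]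
  refine ⟨_, _, toClosureRange E, isCompactification_toClosureRange hE, ?_, ?_⟩
  · rw [range_toClosureRange]
    exact preimage_mem_SuslinF continuous_subtype_val hSE
  · rw [range_toClosureRange, complIn_preimage_of_subset_range
      isClosed_closure.isClosedEmbedding_subtypeVal hSE (by simpa using subset_closure), hcompl]

theorem exists_eq_iSup_of_mem_attainedCompl_sigma (hX : ∃ k, ¬ CompactSpace (X k))
    {γ : Ordinal.{0}} (hγ : γ ∈ AttainedCompl ((k : ℕ) × X k)) :
    ∃ f : ℕ → Ordinal.{0}, (∀ k, f k ∈ AttainedCompl (X k)) ∧ γ = ⨆ k, f k := by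
  obtain ⟨Y, _, E, ⟨_, _, hE, hEd⟩, hS, rfl⟩ := hγ
  have hAL := range_inter_closure_range_sigmaMk hE.isInducing hEd
  have hval : ∀ k, IsClosedEmbedding ((↑) : closure (Set.range (E ∘ Sigma.mk k)) → Y) :=
    fun k => isClosed_closure.isClosedEmbedding_subtypeVal
  have hpre : ∀ k, (↑) ⁻¹' Set.range E = Set.range (toClosureRange (E ∘ Sigma.mk k)) :=
    fun k => by
      ext y
      rw [range_toClosureRange]
      exact ⟨fun h => (Set.ext_iff.1 (hAL k) y).1 ⟨h, y.2⟩,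
        fun h => ((Set.ext_iff.1 (hAL k) y).2 h).1⟩
  have hc : ∀ k, IsCompactification (X k) _ (toClosureRange (E ∘ Sigma.mk k)) := fun k =>
    isCompactification_toClosureRange (hE.comp IsEmbedding.sigmaMk)
  have hSL : ∀ k, (↑) ⁻¹' Set.range E ∈ SuslinF (closure (Set.range (E ∘ Sigma.mk k))) :=
    fun k => preimage_mem_SuslinF continuous_subtype_val hS
  have hSA : ∀ k, Set.range (E ∘ Sigma.mk k) ∈ SuslinF Y := fun k => by
    have := image_mem_SuslinF (hval k) (hSL k)
    rwa [Subtype.image_preimage_coe, Set.inter_comm, hAL k] at this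
  obtain ⟨V, hVo, hAV, hVd⟩ := exists_isOpen_pairwise_disjoint_sigma hE.isInducing hEd
  choose P hP hAP hPV using fun k => exists_FBorel_one_between (hSA k) (hVo k) (hAV k)
  obtain ⟨k₀, hk₀⟩ := hX
  refine ⟨fun k => ComplIn _ (Set.range (toClosureRange (E ∘ Sigma.mk k))),
    fun k => ⟨_, _, _, hc k, hpre k ▸ hSL k, rfl⟩, ?_⟩
  simp only [← hpre]
  refine complIn_eq_iSup_complIn_preimage hval ?_ hSL hP
    (fun k => by simpa only [Subtype.range_coe, hAL k] using hAP k)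
    (fun i j hij => (hVd hij).mono (hPV i) (hPV j))
    ⟨k₀, hpre k₀ ▸ one_le_complIn_of_not_compactSpace (hc k₀) (hpre k₀ ▸ hSL k₀) hk₀⟩
  rintro _ ⟨⟨k, x⟩, rfl⟩
  exact Set.mem_iUnion.2 ⟨k, ⟨_, subset_closure ⟨x, rfl⟩⟩, rfl⟩

end TopologicalSum

theorem attainedCompl_sigma_general (X : ℕ → Type u) [∀ k, TopologicalSpace (X k)]
    (hnc : ∃ k, ¬ CompactSpace (X k)) :
    AttainedCompl ((k : ℕ) × X k) =
      { γ : Ordinal.{0} | ∃ f : ℕ → Ordinal.{0},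
          (∀ k, f k ∈ AttainedCompl (X k)) ∧ γ = ⨆ k, f k } := by
  ext γ
  refine ⟨exists_eq_iSup_of_mem_attainedCompl_sigma hnc, ?_⟩
  rintro ⟨f, hf, rfl⟩
  exact iSup_mem_attainedCompl_sigma hnc hf

/-- For a countable family of K-analytic Tychonoff spaces, at least one
of which is not compact, the set of complexities attained by the topological sum consists
exactly of the suprema of selectors of the sets of attained complexities. -/
theorem attainedCompl_sigma (X : ℕ → Type u) [∀ k, TopologicalSpace (X k)]
    [∀ k, T35Space (X k)] (hK : ∀ k, IsKAnalytic (X k))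
    (hnc : ∃ k, ¬ CompactSpace (X k)) :
    AttainedCompl ((k : ℕ) × X k) =
      { γ : Ordinal.{0} | ∃ f : ℕ → Ordinal.{0},
          (∀ k, f k ∈ AttainedCompl (X k)) ∧ γ = ⨆ k, f k } :=
  attainedCompl_sigma_general X hnc

end FBorelPaper
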